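/- Let A be a group. There is a bijective correspondence between skew brace structures on A with additive group (A,·) and regular subgroups of the holomorph Hol(A) = A ⋊ Aut(A): a skew brace gives the regular subgroup {(a, λ_a) : a ∈ A}, and a regular subgroup G ≤ Hol(A) gives the skew brace with a∘b = a·f(b), where (a,f) is the unique element of G with first coordinate a. -/

import Mathlib

/-!
In a skew brace the compatibility law makes each `λ_a` an automorphism of `(A, ·)` and gives
`λ_{a ∘ b} = λ_a λ_b`, so `a ↦ (a, λ_a)` is an injective homomorphism `(A, ∘) → Hol(A)`; its
image contains exactly one element over each `a`, i.e. is regular. Conversely, a regular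
subgroup `G` is in bijection with `A` through the first coordinate, and transporting the
multiplication of `G` along this bijection gives `a ∘ b = a · f(b)`; compatibility holds because
`f` is an automorphism of `(A, ·)`.
-/


/-- A skew brace: a set `A` with two group operations, the "additive" one given by
the ambient `Group A` instance (written multiplicatively, `·`), and a second group
operation `circ` (`∘`) with identity `cone` and inverses `cinv`, satisfying the
compatibility `a ∘ (b · c) = (a ∘ b) · a⁻¹ · (a ∘ c)`. -/
structure SkewBrace (A : Type*) [Group A] where
  circ : A → A → A
  circ_assoc : ∀ a b c : A, circ (circ a b) c = circ a (circ b c)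
  cone : A
  cone_circ : ∀ a : A, circ cone a = a
  circ_cone : ∀ a : A, circ a cone = a
  cinv : A → A
  cinv_circ : ∀ a : A, circ (cinv a) a = cone
  circ_cinv : ∀ a : A, circ a (cinv a) = cone
  compat : ∀ a b c : A, circ a (b * c) = circ a b * a⁻¹ * circ a c


/-- The holomorph `Hol(A) = A ⋊ Aut(A)`. -/
abbrev Hol (A : Type*) [Group A] := A ⋊[MonoidHom.id (MulAut A)] MulAut A

/-- A subgroup of the holomorph is regular if for each `a : A` it contains a unique
element whose action sends `1` to `a`, i.e. with first coordinate `a`. -/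
def IsRegularSubgroup {A : Type*} [Group A] (G : Subgroup (Hol A)) : Prop :=
  ∀ a : A, ∃! x : Hol A, x ∈ G ∧ x.left = a

namespace SkewBrace

variable {A : Type*} [Group A] (B : SkewBrace A)

theorem circ_one (a : A) : B.circ a 1 = a := by
  have h := B.compat a 1 1
  rw [mul_one, mul_assoc, left_eq_mul, inv_mul_eq_one] at h
  exact h.symm

theorem cone_eq_one : B.cone = 1 := by
  simpa only [B.cone_circ] using (B.circ_one B.cone).symm

theorem one_circ (a : A) : B.circ 1 a = a := by
  simpa only [B.cone_eq_one] using B.cone_circ a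

theorem ext {B₁ B₂ : SkewBrace A} (h : B₁.circ = B₂.circ) : B₁ = B₂ := by
  have hcinv : B₁.cinv = B₂.cinv := by
    funext a
    calc B₁.cinv a = B₁.circ (B₁.cinv a) 1 := (B₁.circ_one _).symm
      _ = B₁.circ (B₁.cinv a) (B₁.circ a (B₂.cinv a)) := by
          rw [h, B₂.circ_cinv, B₂.cone_eq_one]
      _ = B₁.circ (B₁.circ (B₁.cinv a) a) (B₂.cinv a) := (B₁.circ_assoc ..).symm
      _ = B₂.cinv a := by rw [B₁.cinv_circ, B₁.cone_circ]
  have hcone : B₁.cone = B₂.cone := by rw [B₁.cone_eq_one, B₂.cone_eq_one]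
  cases B₁; cases B₂
  subst h hcone hcinv
  rfl

def lambdaHom (a : A) : A →* A where
  toFun b := a⁻¹ * B.circ a b
  map_one' := by rw [B.circ_one, inv_mul_cancel]
  map_mul' b c := by
    rw [B.compat]
    group

theorem lambdaHom_apply (a b : A) : B.lambdaHom a b = a⁻¹ * B.circ a b := rfl

theorem lambdaHom_circ (a b : A) :
    B.lambdaHom (B.circ a b) = (B.lambdaHom a).comp (B.lambdaHom b) := by
  ext c
  have h := B.compat a b (b⁻¹ * B.circ b c)
  rw [mul_inv_cancel_left] at h
  simp only [MonoidHom.comp_apply, lambdaHom_apply, B.circ_assoc, h]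
  group

theorem lambdaHom_one : B.lambdaHom 1 = MonoidHom.id A := by
  ext b
  rw [lambdaHom_apply, B.one_circ, inv_one, one_mul, MonoidHom.id_apply]

theorem lambdaHom_comp_cinv (a : A) : (B.lambdaHom a).comp (B.lambdaHom (B.cinv a)) =
    .id A := by
  rw [← lambdaHom_circ, B.circ_cinv, B.cone_eq_one, lambdaHom_one]

theorem lambdaHom_cinv_comp (a : A) : (B.lambdaHom (B.cinv a)).comp (B.lambdaHom a) =
    .id A := by
  rw [← lambdaHom_circ, B.cinv_circ, B.cone_eq_one, lambdaHom_one]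

def lambda (a : A) : MulAut A :=
  (B.lambdaHom a).toMulEquiv (B.lambdaHom (B.cinv a)) (B.lambdaHom_cinv_comp a)
    (B.lambdaHom_comp_cinv a)

theorem lambda_apply (a b : A) : B.lambda a b = a⁻¹ * B.circ a b := rfl

theorem mul_lambda_apply (a b : A) : a * B.lambda a b = B.circ a b := by
  rw [lambda_apply, mul_inv_cancel_left]

theorem lambda_circ (a b : A) : B.lambda (B.circ a b) = B.lambda a * B.lambda b :=
  MulEquiv.ext (DFunLike.congr_fun (B.lambdaHom_circ a b) ·)

theorem lambda_one : B.lambda 1 = 1 :=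
  MulEquiv.ext (DFunLike.congr_fun B.lambdaHom_one ·)

def toHol (a : A) : Hol A := ⟨a, B.lambda a⟩

theorem toHol_left (a : A) : (B.toHol a).left = a := rfl

theorem toHol_one : B.toHol 1 = 1 :=
  SemidirectProduct.ext rfl B.lambda_one

theorem toHol_circ (a b : A) : B.toHol (B.circ a b) = B.toHol a * B.toHol b :=
  SemidirectProduct.ext (B.mul_lambda_apply a b).symm (B.lambda_circ a b)

theorem toHol_cinv (a : A) : B.toHol (B.cinv a) = (B.toHol a)⁻¹ := by
  refine (inv_eq_of_mul_eq_one_right ?_).symm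
  rw [← toHol_circ, B.circ_cinv, B.cone_eq_one, toHol_one]

theorem eq_toHol_left_iff (x : Hol A) :
    x = B.toHol x.left ↔ ∀ b : A, x.left * x.right b = B.circ x.left b := by
  simp only [SemidirectProduct.ext_iff, toHol_left, true_and, MulEquiv.ext_iff,
    ← B.mul_lambda_apply, mul_right_inj]
  rfl

def toSubgroup : Subgroup (Hol A) where
  carrier := {x : Hol A | ∀ b : A, x.left * x.right b = B.circ x.left b}
  one_mem' := (B.eq_toHol_left_iff 1).mp B.toHol_one.symm
  mul_mem' {x y} hx hy := by
    rw [Set.mem_ofPred_eq, ← eq_toHol_left_iff] at hx hy ⊢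
    rw [hx, hy, ← toHol_circ]
    rfl
  inv_mem' {x} hx := by
    rw [Set.mem_ofPred_eq, ← eq_toHol_left_iff] at hx ⊢
    rw [hx, ← toHol_cinv]
    rfl

theorem mem_toSubgroup_iff (x : Hol A) : x ∈ B.toSubgroup ↔ x = B.toHol x.left :=
  (B.eq_toHol_left_iff x).symm

theorem toHol_mem_toSubgroup (a : A) : B.toHol a ∈ B.toSubgroup :=
  (B.mem_toSubgroup_iff _).mpr rfl

theorem isRegularSubgroup_toSubgroup : IsRegularSubgroup B.toSubgroup := fun a =>
  ⟨B.toHol a, ⟨B.toHol_mem_toSubgroup a, rfl⟩, fun y ⟨hy, hya⟩ =>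
    hya ▸ (B.mem_toSubgroup_iff y).mp hy⟩

end SkewBrace

namespace IsRegularSubgroup

variable {A : Type*} [Group A] {G : Subgroup (Hol A)} (hG : IsRegularSubgroup G)

noncomputable def elem (a : A) : Hol A := (hG a).exists.choose

theorem elem_mem (a : A) : hG.elem a ∈ G := (hG a).exists.choose_spec.1

theorem elem_left (a : A) : (hG.elem a).left = a := (hG a).exists.choose_spec.2

theorem eq_elem_left {x : Hol A} (hx : x ∈ G) : x = hG.elem x.left :=
  (hG x.left).unique ⟨hx, rfl⟩ ⟨hG.elem_mem _, hG.elem_left _⟩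

theorem mem_iff_eq_elem_left (x : Hol A) : x ∈ G ↔ x = hG.elem x.left :=
  ⟨hG.eq_elem_left, fun hx => hx ▸ hG.elem_mem _⟩

theorem elem_one : hG.elem 1 = 1 := (hG.eq_elem_left G.one_mem).symm

theorem mul_elem_right_apply (a b : A) :
    a * (hG.elem a).right b = (hG.elem a * hG.elem b).left := by
  rw [SemidirectProduct.mul_left, hG.elem_left, hG.elem_left, MonoidHom.id_apply]

theorem elem_left_mul_elem (a b : A) :
    hG.elem (hG.elem a * hG.elem b).left = hG.elem a * hG.elem b :=
  (hG.eq_elem_left (G.mul_mem (hG.elem_mem a) (hG.elem_mem b))).symm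

theorem elem_left_inv_elem (a : A) : hG.elem (hG.elem a)⁻¹.left = (hG.elem a)⁻¹ :=
  (hG.eq_elem_left (G.inv_mem (hG.elem_mem a))).symm

noncomputable def toSkewBrace : SkewBrace A where
  circ a b := a * (hG.elem a).right b
  circ_assoc a b c := by
    simp only [hG.mul_elem_right_apply, hG.elem_left_mul_elem]
    rw [← mul_assoc, SemidirectProduct.mul_left _ (hG.elem c), hG.elem_left, MonoidHom.id_apply]
  cone := 1
  cone_circ a := by rw [elem_one, one_mul]; rfl
  circ_cone a := by rw [map_one, mul_one]
  cinv a := (hG.elem a)⁻¹.left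
  cinv_circ a := by
    rw [mul_elem_right_apply, elem_left_inv_elem, inv_mul_cancel]
    rfl
  circ_cinv a := by
    rw [mul_elem_right_apply, elem_left_inv_elem, mul_inv_cancel]
    rfl
  compat a b c := by
    rw [map_mul]
    group

theorem toSkewBrace_circ_of_mem {x : Hol A} (hx : x ∈ G) (b : A) :
    hG.toSkewBrace.circ x.left b = x.left * x.right b := by
  change x.left * (hG.elem x.left).right b = _
  rw [← hG.eq_elem_left hx]

theorem toSkewBrace_toHol (a : A) : hG.toSkewBrace.toHol a = hG.elem a := by
  refine SemidirectProduct.ext (hG.elem_left a).symm (MulEquiv.ext fun b => ?_)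
  exact inv_mul_cancel_left a _

theorem toSubgroup_toSkewBrace : hG.toSkewBrace.toSubgroup = G := by
  ext x
  rw [SkewBrace.mem_toSubgroup_iff, hG.mem_iff_eq_elem_left, toSkewBrace_toHol]

end IsRegularSubgroup

theorem SkewBrace.toSkewBrace_isRegularSubgroup_toSubgroup {A : Type*} [Group A]
    (B : SkewBrace A) : B.isRegularSubgroup_toSubgroup.toSkewBrace = B := by
  refine SkewBrace.ext (funext₂ fun a b => ?_)
  rw [← B.mul_lambda_apply]
  exact B.isRegularSubgroup_toSubgroup.toSkewBrace_circ_of_mem (B.toHol_mem_toSubgroup a) b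

/-- Bijective correspondence between skew brace structures on `A` with additive group
`(A,·)` and regular subgroups of `Hol(A)`: a skew brace corresponds to the subgroup
`{(a, λ_a) : a ∈ A}`, and a regular subgroup `G` gives `a ∘ b = a · f(b)` where
`(a,f)` is the unique element of `G` with first coordinate `a`. -/
theorem skewBrace_equiv_regular_subgroups {A : Type*} [Group A] :
    ∃ e : SkewBrace A ≃ {G : Subgroup (Hol A) // IsRegularSubgroup G},
      (∀ B : SkewBrace A,
        (((e B : Subgroup (Hol A)) : Set (Hol A)) =
          {x : Hol A | ∀ b : A, x.left * x.right b = B.circ x.left b})) ∧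
      (∀ G : {G : Subgroup (Hol A) // IsRegularSubgroup G},
        ∀ x : Hol A, x ∈ (G : Subgroup (Hol A)) →
          ∀ b : A, (e.symm G).circ x.left b = x.left * x.right b) :=
  ⟨{ toFun := fun B => ⟨B.toSubgroup, B.isRegularSubgroup_toSubgroup⟩
     invFun := fun G => G.2.toSkewBrace
     left_inv := SkewBrace.toSkewBrace_isRegularSubgroup_toSubgroup
     right_inv := fun G => Subtype.ext G.2.toSubgroup_toSkewBrace },
    fun _ => rfl, fun G _ hx b => G.2.toSkewBrace_circ_of_mem hx b⟩
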